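/- Let A, B be positive definite n×n complex matrices and X an n×n complex matrix. If the block matrix [[A, X], [X*, B]] is PPT, then the block matrix [[A # B, X], [X*, A # B]] is PPT. -/

import Mathlib

open Matrix ComplexOrder
open scoped Classical

/-- The square root of a positive semidefinite matrix, as it was defined in Mathlib
(Dec 2024) under this name; it has since been removed from Mathlib. -/
noncomputable def Matrix.PosSemidef.sqrt {n : Type*} [Fintype n] [DecidableEq n]
    {A : Matrix n n ℂ} (hA : A.PosSemidef) : Matrix n n ℂ :=
  (hA.1.eigenvectorUnitary : Matrix n n ℂ) * diagonal ((↑) ∘ (√·) ∘ hA.1.eigenvalues) *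
    (star (hA.1.eigenvectorUnitary : Matrix n n ℂ))

theorem Matrix.PosSemidef.posSemidef_sqrt {n : Type*} [Fintype n] [DecidableEq n]
    {A : Matrix n n ℂ} (hA : A.PosSemidef) : hA.sqrt.PosSemidef := by
  unfold Matrix.PosSemidef.sqrt
  have hd : (diagonal ((↑) ∘ (√·) ∘ hA.1.eigenvalues : n → ℂ)).PosSemidef := by
    rw [posSemidef_diagonal_iff]
    intro i
    simp only [Function.comp_apply, Complex.zero_le_real]
    exact Real.sqrt_nonneg _
  have := hd.mul_mul_conjTranspose_same (hA.1.eigenvectorUnitary : Matrix n n ℂ)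
  simpa [star_eq_conjTranspose] using this

theorem Matrix.PosSemidef.sqrt_mul_self {n : Type*} [Fintype n] [DecidableEq n]
    {A : Matrix n n ℂ} (hA : A.PosSemidef) : hA.sqrt * hA.sqrt = A := by
  unfold Matrix.PosSemidef.sqrt
  set U : Matrix n n ℂ := (hA.1.eigenvectorUnitary : Matrix n n ℂ) with hU
  have hUU : star U * U = 1 := Unitary.coe_star_mul_self _
  have hD : diagonal ((↑) ∘ (√·) ∘ hA.1.eigenvalues : n → ℂ) *
      diagonal ((↑) ∘ (√·) ∘ hA.1.eigenvalues : n → ℂ) =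
      diagonal (RCLike.ofReal ∘ hA.1.eigenvalues) := by
    rw [diagonal_mul_diagonal]
    congr 1
    ext i
    simp only [Function.comp_apply, ← Complex.ofReal_mul,
      Real.mul_self_sqrt (hA.eigenvalues_nonneg i)]
    rfl
  calc _ = U * diagonal ((↑) ∘ (√·) ∘ hA.1.eigenvalues : n → ℂ) * (star U * U) *
        diagonal ((↑) ∘ (√·) ∘ hA.1.eigenvalues : n → ℂ) * star U := by
        simp only [Matrix.mul_assoc]
    _ = U * diagonal (RCLike.ofReal ∘ hA.1.eigenvalues) * star U := by
        rw [hUU, Matrix.mul_one, Matrix.mul_assoc U, hD]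
    _ = A := by
        conv_rhs => rw [hA.1.spectral_theorem]
        rw [Unitary.conjStarAlgAut_apply]

/-- The geometric mean `P # Q = P^{1/2} (P^{-1/2} Q P^{-1/2})^{1/2} P^{1/2}` of two
positive definite complex matrices (junk value `0` if `P` or `Q` is not positive definite). -/
noncomputable def geomMean {n : ℕ} (P Q : Matrix (Fin n) (Fin n) ℂ) :
    Matrix (Fin n) (Fin n) ℂ :=
  if h : P.PosDef ∧ Q.PosDef then
    have hs : ((h.1.posSemidef.sqrt⁻¹) * Q * (h.1.posSemidef.sqrt⁻¹)).PosSemidef := by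
      have h1 := h.2.posSemidef.conjTranspose_mul_mul_same (h.1.posSemidef.sqrt⁻¹)
      rwa [Matrix.conjTranspose_nonsing_inv, h.1.posSemidef.posSemidef_sqrt.1.eq] at h1
    h.1.posSemidef.sqrt * hs.sqrt * h.1.posSemidef.sqrt
  else 0

variable {n : ℕ}

lemma posDef_of_psd {M : Matrix (Fin n) (Fin n) ℂ} (hM : M.PosSemidef) (h : IsUnit M.det) :
    M.PosDef := by
  refine posDef_iff_dotProduct_mulVec.mpr ⟨hM.1, fun x hx => ?_⟩
  refine (hM.dotProduct_mulVec_nonneg x).lt_of_ne' fun h0 => hx ?_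
  have hMx : M *ᵥ x = 0 := (hM.dotProduct_mulVec_zero_iff x).mp h0
  have : M⁻¹ *ᵥ (M *ᵥ x) = x := by
    rw [Matrix.mulVec_mulVec, Matrix.nonsing_inv_mul _ h, Matrix.one_mulVec]
  rw [hMx, Matrix.mulVec_zero] at this
  exact this.symm

lemma sqrt_posDef {M : Matrix (Fin n) (Fin n) ℂ} (hM : M.PosDef) :
    hM.posSemidef.sqrt.PosDef := by
  apply posDef_of_psd hM.posSemidef.posSemidef_sqrt
  have h : hM.posSemidef.sqrt.det * hM.posSemidef.sqrt.det = M.det := by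
    rw [← Matrix.det_mul, hM.posSemidef.sqrt_mul_self]
  have hd : M.det ≠ 0 := hM.det_pos.ne'
  rw [isUnit_iff_ne_zero]
  intro h0
  rw [h0, mul_zero] at h
  exact hd h.symm

lemma geomMean_spec {A B : Matrix (Fin n) (Fin n) ℂ} (hA : A.PosDef) (hB : B.PosDef) :
    (geomMean A B).PosDef ∧ geomMean A B * A⁻¹ * geomMean A B = B := by
  set S := hA.posSemidef.sqrt with hS_def
  have hS : S.PosDef := sqrt_posDef hA
  have hSh : S.IsHermitian := hA.posSemidef.posSemidef_sqrt.1
  have hSS : S * S = A := hA.posSemidef.sqrt_mul_self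
  haveI : Invertible S := Matrix.invertibleOfIsUnitDet S (isUnit_iff_ne_zero.mpr hS.det_pos.ne')
  have hs : ((S⁻¹) * B * (S⁻¹)).PosSemidef := by
    have h1 := hB.posSemidef.conjTranspose_mul_mul_same (S⁻¹)
    rwa [Matrix.conjTranspose_nonsing_inv, hSh.eq] at h1
  have hsPD : ((S⁻¹) * B * (S⁻¹)).PosDef := by
    apply posDef_of_psd hs
    rw [Matrix.det_mul, Matrix.det_mul, isUnit_iff_ne_zero]
    have h1 : (S⁻¹).det ≠ 0 := by
      rw [Matrix.det_nonsing_inv]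
      simpa using hS.det_pos.ne'
    exact mul_ne_zero (mul_ne_zero h1 hB.det_pos.ne') h1
  set R := hs.sqrt with hR_def
  have hRR : R * R = S⁻¹ * B * S⁻¹ := hs.sqrt_mul_self
  have hR : R.PosDef := sqrt_posDef hsPD
  have hRh : R.IsHermitian := hs.posSemidef_sqrt.1
  have hGeq : geomMean A B = S * R * S := by
    rw [geomMean, dif_pos ⟨hA, hB⟩]
  constructor
  · rw [hGeq]
    apply posDef_of_psd
    · have := hR.posSemidef.conjTranspose_mul_mul_same S
      rwa [hSh.eq] at this
    · rw [Matrix.det_mul, Matrix.det_mul, isUnit_iff_ne_zero]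
      exact mul_ne_zero (mul_ne_zero hS.det_pos.ne' hR.det_pos.ne') hS.det_pos.ne'
  · rw [hGeq, ← hSS, Matrix.mul_inv_rev]
    have key : S * R * S * (S⁻¹ * S⁻¹) * (S * R * S) = S * (R * R) * S := by
      simp only [← Matrix.invOf_eq_nonsing_inv]
      simp only [mul_assoc, mul_invOf_cancel_left, invOf_mul_cancel_left, invOf_mul_self,
        mul_invOf_self, mul_one, one_mul]
    rw [key, hRR]
    simp only [← Matrix.invOf_eq_nonsing_inv]
    simp only [mul_assoc, mul_invOf_cancel_left, invOf_mul_cancel_left, invOf_mul_self,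
      mul_invOf_self, mul_one, one_mul]

lemma contraction_mulVec {C : Matrix (Fin n) (Fin n) ℂ} (h : (1 - Cᴴ * C).PosSemidef)
    (v : Fin n → ℂ) : star (C *ᵥ v) ⬝ᵥ (C *ᵥ v) ≤ star v ⬝ᵥ v := by
  have h0 := h.dotProduct_mulVec_nonneg v
  rw [Matrix.sub_mulVec, Matrix.one_mulVec, dotProduct_sub] at h0
  have key : star v ⬝ᵥ ((Cᴴ * C) *ᵥ v) = star (C *ᵥ v) ⬝ᵥ (C *ᵥ v) := by
    rw [← Matrix.mulVec_mulVec, Matrix.dotProduct_mulVec, ← Matrix.star_mulVec]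
  rw [key] at h0
  exact sub_nonneg.mp h0

set_option maxHeartbeats 1000000 in
lemma core {A B X : Matrix (Fin n) (Fin n) ℂ} (hA : A.PosDef) (hB : B.PosDef)
    (hH : (Matrix.fromBlocks A X Xᴴ B).PosSemidef)
    (hτ : (Matrix.fromBlocks A Xᴴ X B).PosSemidef) :
    (Matrix.fromBlocks (geomMean A B) X Xᴴ (geomMean A B)).PosSemidef := by
  obtain ⟨hG, hGAG⟩ := geomMean_spec hA hB
  set G := geomMean A B with hG_def
  set S := hA.posSemidef.sqrt with hS_def
  set T := hB.posSemidef.sqrt with hT_def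
  set R := hG.posSemidef.sqrt with hR_def
  have hS : S.PosDef := sqrt_posDef hA
  have hT : T.PosDef := sqrt_posDef hB
  have hR : R.PosDef := sqrt_posDef hG
  have hSh : S.IsHermitian := hS.1
  have hTh : T.IsHermitian := hT.1
  have hRh : R.IsHermitian := hR.1
  have hGh : G.IsHermitian := hG.1
  have hSS : S * S = A := hA.posSemidef.sqrt_mul_self
  have hTT : T * T = B := hB.posSemidef.sqrt_mul_self
  have hRRG : R * R = G := hG.posSemidef.sqrt_mul_self
  haveI : Invertible S := Matrix.invertibleOfIsUnitDet S (isUnit_iff_ne_zero.mpr hS.det_pos.ne')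
  haveI : Invertible T := Matrix.invertibleOfIsUnitDet T (isUnit_iff_ne_zero.mpr hT.det_pos.ne')
  haveI : Invertible R := Matrix.invertibleOfIsUnitDet R (isUnit_iff_ne_zero.mpr hR.det_pos.ne')
  haveI : Invertible G := Matrix.invertibleOfIsUnitDet G (isUnit_iff_ne_zero.mpr hG.det_pos.ne')
  haveI : Invertible A := Matrix.invertibleOfIsUnitDet A (isUnit_iff_ne_zero.mpr hA.det_pos.ne')
  haveI : Invertible B := Matrix.invertibleOfIsUnitDet B (isUnit_iff_ne_zero.mpr hB.det_pos.ne')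
  have hAinv : A⁻¹ = S⁻¹ * S⁻¹ := by rw [← hSS, Matrix.mul_inv_rev]
  have hBinv : B⁻¹ = T⁻¹ * T⁻¹ := by rw [← hTT, Matrix.mul_inv_rev]
  have hGinvRR : G⁻¹ = R⁻¹ * R⁻¹ := by rw [← hRRG, Matrix.mul_inv_rev]
  -- G * B⁻¹ * G = A
  have hGBG : G * B⁻¹ * G = A := by
    have h1 : B⁻¹ = G⁻¹ * A * G⁻¹ := by
      rw [← hGAG, Matrix.mul_inv_rev, Matrix.mul_inv_rev,
        Matrix.nonsing_inv_nonsing_inv _ (isUnit_iff_ne_zero.mpr hA.det_pos.ne')]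
      simp only [Matrix.mul_assoc]
    rw [h1]
    simp only [← Matrix.invOf_eq_nonsing_inv]
    simp only [mul_assoc, mul_invOf_cancel_left, invOf_mul_cancel_left, invOf_mul_self,
      mul_invOf_self, mul_one, one_mul]
  have hGinv : G⁻¹ = S⁻¹ * S⁻¹ * G * (T⁻¹ * T⁻¹) := by
    rw [← hAinv, ← hBinv]
    apply Matrix.inv_eq_right_inv
    calc G * (A⁻¹ * G * B⁻¹) = (G * A⁻¹ * G) * B⁻¹ := by simp only [Matrix.mul_assoc]
    _ = 1 := by rw [hGAG, Matrix.mul_nonsing_inv _ (isUnit_iff_ne_zero.mpr hB.det_pos.ne')]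
  -- the unitary U and contractions K, L
  set U := S⁻¹ * G * T⁻¹ with hU_def
  set K := S⁻¹ * X * T⁻¹ with hK_def
  set L := T⁻¹ * X * S⁻¹ with hL_def
  have hSinvh : (S⁻¹)ᴴ = S⁻¹ := by rw [Matrix.conjTranspose_nonsing_inv, hSh.eq]
  have hTinvh : (T⁻¹)ᴴ = T⁻¹ := by rw [Matrix.conjTranspose_nonsing_inv, hTh.eq]
  have hRinvh : (R⁻¹)ᴴ = R⁻¹ := by rw [Matrix.conjTranspose_nonsing_inv, hRh.eq]
  have hUh : Uᴴ = T⁻¹ * G * S⁻¹ := by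
    rw [hU_def, Matrix.conjTranspose_mul, Matrix.conjTranspose_mul, hSinvh, hTinvh, hGh.eq,
      Matrix.mul_assoc]
  have hKh : Kᴴ = T⁻¹ * Xᴴ * S⁻¹ := by
    rw [hK_def, Matrix.conjTranspose_mul, Matrix.conjTranspose_mul, hSinvh, hTinvh,
      Matrix.mul_assoc]
  have hLh : Lᴴ = S⁻¹ * Xᴴ * T⁻¹ := by
    rw [hL_def, Matrix.conjTranspose_mul, Matrix.conjTranspose_mul, hSinvh, hTinvh,
      Matrix.mul_assoc]
  -- unitarity
  have hUU : Uᴴ * U = 1 := by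
    rw [hUh, hU_def]
    have e1 : T⁻¹ * G * S⁻¹ * (S⁻¹ * G * T⁻¹) = T⁻¹ * (G * A⁻¹ * G) * T⁻¹ := by
      rw [hAinv]; simp only [Matrix.mul_assoc]
    rw [e1, hGAG, ← hTT]
    simp only [← Matrix.invOf_eq_nonsing_inv]
    simp only [mul_assoc, mul_invOf_cancel_left, invOf_mul_cancel_left, invOf_mul_self,
      mul_invOf_self, mul_one, one_mul]
  have hUUt : U * Uᴴ = 1 := by
    rw [hUh, hU_def]
    have e1 : S⁻¹ * G * T⁻¹ * (T⁻¹ * G * S⁻¹) = S⁻¹ * (G * B⁻¹ * G) * S⁻¹ := by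
      rw [hBinv]; simp only [Matrix.mul_assoc]
    rw [e1, hGBG, ← hSS]
    simp only [← Matrix.invOf_eq_nonsing_inv]
    simp only [mul_assoc, mul_invOf_cancel_left, invOf_mul_cancel_left, invOf_mul_self,
      mul_invOf_self, mul_one, one_mul]
  -- Schur complements of the hypotheses
  have hτ' : (Matrix.fromBlocks A Xᴴ (Xᴴ)ᴴ B).PosSemidef := by
    rwa [Matrix.conjTranspose_conjTranspose]
  have hH₁ : (B - Xᴴ * A⁻¹ * X).PosSemidef := (Matrix.PosDef.fromBlocks₁₁ X B hA).mp hH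
  have hH₂ : (A - X * B⁻¹ * Xᴴ).PosSemidef := (Matrix.PosDef.fromBlocks₂₂ A X hB).mp hH
  have hτ₂ : (A - Xᴴ * B⁻¹ * X).PosSemidef := by
    have := (Matrix.PosDef.fromBlocks₂₂ A Xᴴ hB).mp hτ'
    rwa [Matrix.conjTranspose_conjTranspose] at this
  -- contraction facts
  have c1 : (1 - Kᴴ * K).PosSemidef := by
    have h1 := hH₁.conjTranspose_mul_mul_same (T⁻¹)
    rw [hTinvh] at h1
    have e : T⁻¹ * (B - Xᴴ * A⁻¹ * X) * T⁻¹ = 1 - Kᴴ * K := by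
      rw [hKh, hK_def, hAinv, ← hTT]
      simp only [Matrix.mul_sub, Matrix.sub_mul]
      simp only [← Matrix.invOf_eq_nonsing_inv]
      simp only [mul_assoc, mul_invOf_cancel_left, invOf_mul_cancel_left, invOf_mul_self,
        mul_invOf_self, mul_one, one_mul]
    rwa [e] at h1
  have c2 : (1 - K * Kᴴ).PosSemidef := by
    have h1 := hH₂.conjTranspose_mul_mul_same (S⁻¹)
    rw [hSinvh] at h1
    have e : S⁻¹ * (A - X * B⁻¹ * Xᴴ) * S⁻¹ = 1 - K * Kᴴ := by
      rw [hKh, hK_def, hBinv, ← hSS]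
      simp only [Matrix.mul_sub, Matrix.sub_mul]
      simp only [← Matrix.invOf_eq_nonsing_inv]
      simp only [mul_assoc, mul_invOf_cancel_left, invOf_mul_cancel_left, invOf_mul_self,
        mul_invOf_self, mul_one, one_mul]
    rwa [e] at h1
  have c3 : (1 - Lᴴ * L).PosSemidef := by
    have h1 := hτ₂.conjTranspose_mul_mul_same (S⁻¹)
    rw [hSinvh] at h1
    have e : S⁻¹ * (A - Xᴴ * B⁻¹ * X) * S⁻¹ = 1 - Lᴴ * L := by
      rw [hLh, hL_def, hBinv, ← hSS]
      simp only [Matrix.mul_sub, Matrix.sub_mul]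
      simp only [← Matrix.invOf_eq_nonsing_inv]
      simp only [mul_assoc, mul_invOf_cancel_left, invOf_mul_cancel_left, invOf_mul_self,
        mul_invOf_self, mul_one, one_mul]
    rwa [e] at h1
  have cU : (1 - Uᴴ * U).PosSemidef := by
    rw [hUU, sub_self]
    exact Matrix.PosSemidef.zero
  -- the matrix M and Λ
  set M := Xᴴ * G⁻¹ * X with hM_def
  have hMpsd : M.PosSemidef := hG.inv.posSemidef.conjTranspose_mul_mul_same X
  set Lam := R⁻¹ * M * R⁻¹ with hLam_def
  have hLampsd : Lam.PosSemidef := by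
    have h1 := hMpsd.conjTranspose_mul_mul_same (R⁻¹)
    rwa [hRinvh] at h1
  set N := Kᴴ * U * L * U with hN_def
  -- key similarity identity
  have id1 : M * G⁻¹ = T * N * T⁻¹ := by
    rw [hM_def, hN_def, hKh, hL_def, hU_def, hGinv]
    simp only [← Matrix.invOf_eq_nonsing_inv]
    simp only [mul_assoc, mul_invOf_cancel_left, invOf_mul_cancel_left, invOf_mul_self,
      mul_invOf_self, mul_one, one_mul]
  have hRGR : G⁻¹ * R = R⁻¹ := by
    rw [hGinvRR]
    simp only [← Matrix.invOf_eq_nonsing_inv]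
    simp only [mul_assoc, mul_invOf_cancel_left, invOf_mul_cancel_left, invOf_mul_self,
      mul_invOf_self, mul_one, one_mul]
  have hcomm : (T⁻¹ * R) * Lam = N * (T⁻¹ * R) := by
    have e1 : (T⁻¹ * R) * Lam = T⁻¹ * (M * R⁻¹) := by
      rw [hLam_def]
      simp only [← Matrix.invOf_eq_nonsing_inv]
      simp only [mul_assoc, mul_invOf_cancel_left, invOf_mul_cancel_left, invOf_mul_self,
        mul_invOf_self, mul_one, one_mul]
    rw [e1, ← hRGR, ← Matrix.mul_assoc M, id1]
    simp only [← Matrix.invOf_eq_nonsing_inv]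
    simp only [mul_assoc, mul_invOf_cancel_left, invOf_mul_cancel_left, invOf_mul_self,
      mul_invOf_self, mul_one, one_mul]
  -- eigenvalue bound
  have key : ∀ (lam : ℝ) (x : Fin n → ℂ), x ≠ 0 → Lam *ᵥ x = (lam : ℂ) • x → lam ≤ 1 := by
    intro lam x hx hev
    set y := (T⁻¹ * R) *ᵥ x with hy_def
    have hy0 : y ≠ 0 := by
      intro h0
      apply hx
      have : (R⁻¹ * T) *ᵥ y = x := by
        rw [hy_def, Matrix.mulVec_mulVec, ← Matrix.mul_assoc]
        have : R⁻¹ * T * T⁻¹ * R = 1 := by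
          simp only [← Matrix.invOf_eq_nonsing_inv]
          simp only [mul_assoc, mul_invOf_cancel_left, invOf_mul_cancel_left, invOf_mul_self,
            mul_invOf_self, mul_one, one_mul]
        rw [this, Matrix.one_mulVec]
      rw [h0, Matrix.mulVec_zero] at this
      exact this.symm
    have hy : N *ᵥ y = (lam : ℂ) • y := by
      rw [hy_def, Matrix.mulVec_mulVec, ← hcomm, ← Matrix.mulVec_mulVec, hev,
        Matrix.mulVec_smul]
    have hchain : star (N *ᵥ y) ⬝ᵥ (N *ᵥ y) ≤ star y ⬝ᵥ y := by
      have hNy : N *ᵥ y = Kᴴ *ᵥ (U *ᵥ (L *ᵥ (U *ᵥ y))) := by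
        rw [hN_def]
        simp only [Matrix.mulVec_mulVec, Matrix.mul_assoc]
      rw [hNy]
      have cKh : (1 - (Kᴴ)ᴴ * Kᴴ).PosSemidef := by
        rw [Matrix.conjTranspose_conjTranspose]
        exact c2
      have s1 := @contraction_mulVec n (Kᴴ) cKh (U *ᵥ (L *ᵥ (U *ᵥ y)))
      have s2 := @contraction_mulVec n U cU (L *ᵥ (U *ᵥ y))
      have s3 := @contraction_mulVec n L c3 (U *ᵥ y)
      have s4 := @contraction_mulVec n U cU y
      exact le_trans s1 (le_trans s2 (le_trans s3 s4))
    rw [hy] at hchain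
    have hq : star ((lam : ℂ) • y) ⬝ᵥ ((lam : ℂ) • y) = (lam : ℂ) * ((lam : ℂ) * (star y ⬝ᵥ y)) := by
      rw [star_smul, smul_dotProduct, dotProduct_smul, smul_eq_mul, smul_eq_mul]
      have hst : star ((lam : ℂ)) = (lam : ℂ) := by
        simp [Complex.ext_iff]
      rw [hst]
    rw [hq] at hchain
    have hqy : (0 : ℂ) < star y ⬝ᵥ y := by
      rcases (dotProduct_star_self_nonneg y).lt_or_eq with h | h
      · exact h
      · exact absurd (dotProduct_star_self_eq_zero.mp h.symm) hy0
    rw [Complex.lt_def] at hqy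
    have him : (star y ⬝ᵥ y).im = 0 := by simpa using hqy.2.symm
    have hre : 0 < (star y ⬝ᵥ y).re := by simpa using hqy.1
    rw [Complex.le_def] at hchain
    have hrel : lam * (lam * (star y ⬝ᵥ y).re) ≤ (star y ⬝ᵥ y).re := by
      have h1 := hchain.1
      have e2 : ((lam : ℂ) * ((lam : ℂ) * (star y ⬝ᵥ y))).re
          = lam * (lam * (star y ⬝ᵥ y).re) := by
        simp [Complex.mul_re, Complex.ofReal_re, Complex.ofReal_im, him]
      rwa [e2] at h1
    nlinarith [sq_nonneg (lam - 1), sq_nonneg lam, hre]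
  -- 1 - Lam is PSD
  have hIH : (1 - Lam).IsHermitian := Matrix.isHermitian_one.sub hLampsd.1
  have hIL : (1 - Lam).PosSemidef := by
    apply hIH.posSemidef_iff_eigenvalues_nonneg.mpr
    intro i
    rw [Pi.zero_apply]
    set μ := hIH.eigenvalues i with hmu_def
    set v : Fin n → ℂ := ⇑(hIH.eigenvectorBasis i) with hv_def
    have hv0 : v ≠ 0 := by
      have := hIH.eigenvectorBasis.orthonormal.ne_zero i
      intro h0
      apply this
      ext j
      exact congrFun h0 j
    have hev : (1 - Lam) *ᵥ v = (μ : ℂ) • v := by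
      have h1 := hIH.mulVec_eigenvectorBasis i
      rw [h1]
      ext j
      simp only [Pi.smul_apply, Complex.real_smul, smul_eq_mul]
      rfl
    have hev2 : Lam *ᵥ v = ((1 - μ : ℝ) : ℂ) • v := by
      rw [Matrix.sub_mulVec, Matrix.one_mulVec] at hev
      have e3 : Lam *ᵥ v = v - (v - Lam *ᵥ v) := (sub_sub_cancel _ _).symm
      rw [e3, hev, Complex.ofReal_sub, Complex.ofReal_one, sub_smul, one_smul]
    have := key (1 - μ) v hv0 hev2
    linarith
  -- conclude G - Xᴴ G⁻¹ X is PSD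
  have hfinal : (G - Xᴴ * G⁻¹ * X).PosSemidef := by
    have h1 := hIL.conjTranspose_mul_mul_same R
    rw [hRh.eq] at h1
    have e : R * (1 - Lam) * R = G - Xᴴ * G⁻¹ * X := by
      rw [hLam_def, hM_def, ← hRRG]
      simp only [Matrix.mul_sub, Matrix.sub_mul]
      simp only [← Matrix.invOf_eq_nonsing_inv]
      simp only [mul_assoc, mul_invOf_cancel_left, invOf_mul_cancel_left, invOf_mul_self,
        mul_invOf_self, mul_one, one_mul]
    rwa [e] at h1
  exact (Matrix.PosDef.fromBlocks₁₁ X G hG).mpr hfinal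

theorem stmt7 {n : ℕ} (A B X : Matrix (Fin n) (Fin n) ℂ)
    (hA : A.PosDef) (hB : B.PosDef)
    (hH : (Matrix.fromBlocks A X Xᴴ B).PosSemidef)
    (hτ : (Matrix.fromBlocks A Xᴴ X B).PosSemidef) :
    (Matrix.fromBlocks (geomMean A B) X Xᴴ (geomMean A B)).PosSemidef ∧
      (Matrix.fromBlocks (geomMean A B) Xᴴ X (geomMean A B)).PosSemidef := by
  constructor
  · exact core hA hB hH hτ
  · have h1 : (Matrix.fromBlocks A Xᴴ (Xᴴ)ᴴ B).PosSemidef := by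
      rwa [Matrix.conjTranspose_conjTranspose]
    have h2 : (Matrix.fromBlocks A (Xᴴ)ᴴ Xᴴ B).PosSemidef := by
      rwa [Matrix.conjTranspose_conjTranspose]
    have h3 := core hA hB h1 h2
    rwa [Matrix.conjTranspose_conjTranspose] at h3
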